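/- In the Perfekt setup, assume condition (A): the closed unit ball of (E₀, ‖·‖_∞) is dense in the closed unit ball of (E, ‖·‖_∞) with respect to the norm of X. Then E₀ is an M-ideal in (E, ‖·‖_∞). -/

import Mathlib

/-!
Condition (A) gives, for every `f ∈ E`, a sequence in `E₀`, bounded by `‖f‖`, whose
representatives converge to one of `f` in `X`; by Banach–Steinhaus it converges to `f` uniformly
on compact subsets of `ℒ`. A gliding-hump argument shows that a bounded family in `C₀(ℒ, Y)`
tending to `0` uniformly on compacts is weakly null in `C_b(ℒ, Y)`, hence, by Hahn–Banach, in `E`.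
So for `φ ∈ E*` the limit `(P φ) f = lim φ (fₙ)` exists and does not depend on the approximating
sequence; `P` is a projection of norm at most one with kernel `E₀^⊥`.

For `‖P φ‖ + ‖φ - P φ‖ ≤ ‖φ‖`, test `φ` on `g + f - (1/N) ∑ gⱼ`, where `g ∈ E₀` almost norms
`P φ`, `f` almost norms `φ - P φ`, and the `gⱼ ∈ E₀` are `δ`-close to `f` on an increasing chain
of compact sets, each containing the hump `{‖gᵢ‖ ≥ δ}` of the earlier ones and that of `g`. At
every point at most one `gⱼ` is both off its compact set and large, so the norm of the test
vector is at most `1 + 2δ + 2/N`, while `φ` of it is almost `‖P φ‖ + ‖φ - P φ‖`.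
-/

/-- A bounded continuous function vanishes at infinity if `{t | ε ≤ ‖f t‖}` is compact
for every `ε > 0`. -/
def ZeroAtInfty {L Y : Type*} [TopologicalSpace L] [NormedAddCommGroup Y]
    (f : BoundedContinuousFunction L Y) : Prop :=
  ∀ ε > (0 : ℝ), IsCompact {t : L | ε ≤ ‖f t‖}

/-- The subspace of `C_b(L, Y)` of functions vanishing at infinity, i.e. `C₀(L, Y)`. -/
def zeroAtInftySubmodule (L Y : Type*) [TopologicalSpace L] [NormedAddCommGroup Y]
    [NormedSpace ℝ Y] : Submodule ℝ (BoundedContinuousFunction L Y) where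
  carrier := {f | ZeroAtInfty f}
  zero_mem' := by
    intro ε hε
    have h : {t : L | ε ≤ ‖(0 : BoundedContinuousFunction L Y) t‖} = ∅ := by
      ext t
      simp only [BoundedContinuousFunction.coe_zero, Pi.zero_apply, norm_zero,
        Set.mem_setOf_eq, Set.mem_empty_iff_false, iff_false, not_le]
      exact hε
    rw [h]; exact isCompact_empty
  add_mem' := by
    rintro f g hf hg ε hε
    have h := (hf (ε / 2) (by linarith)).union (hg (ε / 2) (by linarith))
    refine h.of_isClosed_subset (isClosed_le continuous_const ((f + g).continuous.norm)) ?_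
    intro t ht
    have ht' : ε ≤ ‖(f + g) t‖ := ht
    by_contra hc
    simp only [Set.mem_union, Set.mem_setOf_eq, not_or, not_le] at hc
    have hb : ‖(f + g) t‖ ≤ ‖f t‖ + ‖g t‖ := by
      rw [BoundedContinuousFunction.add_apply]; exact norm_add_le _ _
    linarith [hc.1, hc.2]
  smul_mem' := by
    rintro c f hf ε hε
    by_cases hc : c = 0
    · subst hc
      have h : {t : L | ε ≤ ‖((0 : ℝ) • f) t‖} = ∅ := by
        ext t
        simp only [Set.mem_setOf_eq, Set.mem_empty_iff_false, iff_false, not_le]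
        rw [BoundedContinuousFunction.coe_smul]
        simpa using hε
      rw [h]; exact isCompact_empty
    · have hcn : (0 : ℝ) < ‖c‖ := norm_pos_iff.mpr hc
      have h := hf (ε / ‖c‖) (by positivity)
      refine h.of_isClosed_subset (isClosed_le continuous_const ((c • f).continuous.norm)) ?_
      intro t ht
      have ht' : ε ≤ ‖(c • f) t‖ := ht
      have heq : ‖(c • f) t‖ = ‖c‖ * ‖f t‖ := by
        rw [BoundedContinuousFunction.coe_smul]; simp [norm_smul]
      rw [heq] at ht'
      have : ε / ‖c‖ ≤ ‖f t‖ := by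
        rw [div_le_iff₀ hcn]; linarith [mul_comm ‖c‖ ‖f t‖]
      exact this

/-- The subspace `E` of `C_b(ℒ, Y)` consisting of the functions `x̂ : T ↦ T x` for `x ∈ X`. -/
def perfektE {X Y ι : Type*} [NormedAddCommGroup X] [NormedSpace ℝ X]
    [NormedAddCommGroup Y] [NormedSpace ℝ Y] [TopologicalSpace ι]
    (T : ι → X →L[ℝ] Y) : Submodule ℝ (BoundedContinuousFunction ι Y) where
  carrier := {f | ∃ x : X, ∀ i, f i = T i x}
  zero_mem' := ⟨0, fun i => by simp⟩
  add_mem' := by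
    rintro f g ⟨x, hx⟩ ⟨y, hy⟩
    exact ⟨x + y, fun i => by simp [hx i, hy i]⟩
  smul_mem' := by
    rintro c f ⟨x, hx⟩
    exact ⟨c • x, fun i => by simp [hx i]⟩

/-- A subset `E₀` of a Banach space `E` is an *M-ideal* in `E` if there is a bounded linear
projection `P` on the dual `E*` whose kernel is the annihilator of `E₀` and which satisfies
`‖φ‖ = ‖P φ‖ + ‖φ - P φ‖` for every `φ ∈ E*`. -/
def IsMIdeal {E : Type*} [NormedAddCommGroup E] [NormedSpace ℝ E] (E₀ : Set E) : Prop :=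
  ∃ P : (E →L[ℝ] ℝ) →L[ℝ] (E →L[ℝ] ℝ),
    (∀ φ, P (P φ) = P φ) ∧
    (∀ φ, P φ = 0 ↔ ∀ y ∈ E₀, φ y = 0) ∧
    (∀ φ, ‖φ‖ = ‖P φ‖ + ‖φ - P φ‖)

open Filter Topology
open scoped BoundedContinuousFunction

theorem Finset.sum_le_card_mul_add_of_subsingleton {κ : Type*} (s : Finset κ) {x : κ → ℝ}
    {a b : ℝ} (ha : 0 ≤ a) (hb : 0 ≤ b) (hxb : ∀ j ∈ s, x j ≤ b)
    (hx : {j | a < x j}.Subsingleton) :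
    ∑ j ∈ s, x j ≤ s.card * a + b := by
  classical
  rw [← s.sum_filter_add_sum_filter_not (fun j => a < x j), add_comm]
  have hcard : (s.filter fun j => a < x j).card ≤ 1 :=
    Finset.card_le_one.2 fun i hi j hj => hx (Finset.mem_filter.1 hi).2 (Finset.mem_filter.1 hj).2
  gcongr
  · calc ∑ j ∈ s.filter (fun j => ¬a < x j), x j
        ≤ (s.filter fun j => ¬a < x j).card • a :=
          Finset.sum_le_card_nsmul _ _ _ fun j hj => not_lt.1 (Finset.mem_filter.1 hj).2
      _ ≤ s.card * a := by
          rw [nsmul_eq_mul]; gcongr; exact Finset.filter_subset _ s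
  · calc ∑ j ∈ s.filter (fun j => a < x j), x j
        ≤ (s.filter fun j => a < x j).card • b :=
          Finset.sum_le_card_nsmul _ _ _ fun j hj => hxb j (Finset.mem_filter.1 hj).1
      _ ≤ b := by
          rw [nsmul_eq_mul]
          exact mul_le_of_le_one_left hb (by exact_mod_cast hcard)

theorem ContinuousLinearMap.exists_norm_le_one_and_opNorm_sub_le_apply {F : Type*}
    [NormedAddCommGroup F] [NormedSpace ℝ F] (ξ : F →L[ℝ] ℝ) {ε : ℝ} (hε : 0 < ε) :
    ∃ u : F, ‖u‖ ≤ 1 ∧ ‖ξ‖ - ε ≤ ξ u := by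
  obtain ⟨u, hu, hξu⟩ := ξ.exists_lt_apply_of_lt_opNorm (sub_lt_self ‖ξ‖ hε)
  rcases le_abs.1 (Real.norm_eq_abs _ ▸ hξu.le) with hpos | hneg
  · exact ⟨u, hu.le, hpos⟩
  · exact ⟨-u, by rw [norm_neg]; exact hu.le, by rwa [map_neg]⟩

section Compact

variable {𝕜 β ι E F : Type*} [NontriviallyNormedField 𝕜] [NormedAddCommGroup E]
  [NormedSpace 𝕜 E] [CompleteSpace E] [NormedAddCommGroup F] [NormedSpace 𝕜 F]
  [TopologicalSpace ι] {T : ι → E →L[𝕜] F} {K : Set ι}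

theorem IsCompact.exists_forall_opNorm_le_of_continuous_apply
    (hT : ∀ x, Continuous fun i => T i x) (hK : IsCompact K) :
    ∃ C, ∀ i ∈ K, ‖T i‖ ≤ C := by
  obtain ⟨C, hC⟩ := banach_steinhaus (g := fun i : K => T i) fun x => by
    obtain ⟨C, hC⟩ := (hK.image (hT x).norm).bddAbove
    exact ⟨C, fun i => hC ⟨i, i.2, rfl⟩⟩
  exact ⟨C, fun i hi => hC ⟨i, hi⟩⟩

theorem IsCompact.tendstoUniformlyOn_apply_of_tendsto
    (hT : ∀ x, Continuous fun i => T i x) (hK : IsCompact K) {l : Filter β} {x : β → E}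
    {y : E} (hxy : Tendsto x l (𝓝 y)) :
    TendstoUniformlyOn (fun n i => T i (x n)) (fun i => T i y) l K := by
  obtain ⟨C, hC⟩ := hK.exists_forall_opNorm_le_of_continuous_apply hT
  have hsmall : Tendsto (fun n => C * ‖x n - y‖) l (𝓝 0) := by
    simpa using (tendsto_iff_norm_sub_tendsto_zero.1 hxy).const_mul C
  refine Metric.tendstoUniformlyOn_iff.2 fun ε hε => ?_
  filter_upwards [hsmall.eventually (gt_mem_nhds hε)] with n hn i hi
  calc dist (T i y) (T i (x n)) = ‖T i (x n - y)‖ := by rw [dist_comm, dist_eq_norm, map_sub]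
    _ ≤ ‖T i‖ * ‖x n - y‖ := (T i).le_opNorm _
    _ ≤ C * ‖x n - y‖ := by gcongr; exact hC i hi
    _ < ε := hn

end Compact

section Hump

variable {ι Y : Type*} [TopologicalSpace ι] [NormedAddCommGroup Y]

theorem exists_seq_subsingleton_humps {α : Type*} (F : α → ι →ᵇ Y)
    (P : Set ι → α → Prop) (hP : ∀ K, IsCompact K → ∃ a, ZeroAtInfty (F a) ∧ P K a)
    {δ : ℝ} (hδ : 0 < δ) {K₀ : Set ι} (hK₀ : IsCompact K₀) :
    ∃ (a : ℕ → α) (K : ℕ → Set ι), (∀ j, P (K j) (a j)) ∧ (∀ j, K₀ ⊆ K j) ∧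
      ∀ t, {j | t ∉ K j ∧ δ ≤ ‖F (a j) t‖}.Subsingleton := by
  choose pick hpick0 hpickP using hP
  let K : ℕ → {K : Set ι // IsCompact K} := fun j => Nat.rec ⟨K₀, hK₀⟩
    (fun _ K => ⟨K.1 ∪ {t | δ ≤ ‖F (pick K.1 K.2) t‖}, K.2.union (hpick0 K.1 K.2 δ hδ)⟩) j
  have hmono : Monotone fun j => (K j).1 :=
    monotone_nat_of_le_succ fun _ => Set.subset_union_left
  have hswallow : ∀ t i j, i < j → δ ≤ ‖F (pick (K i).1 (K i).2) t‖ → t ∈ (K j).1 :=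
    fun t i j hij ht => hmono hij (Set.subset_union_right ht)
  refine ⟨fun j => pick (K j).1 (K j).2, fun j => (K j).1, fun j => hpickP _ _,
    fun j => hmono (Nat.zero_le j), fun t i ⟨hi, hit⟩ j ⟨hj, hjt⟩ => ?_⟩
  rcases lt_trichotomy i j with h | h | h
  · exact absurd (hswallow t i j h hit) hj
  · exact h
  · exact absurd (hswallow t j i h hjt) hi

end Hump

namespace BoundedContinuousFunction

variable {ι Y : Type*} [TopologicalSpace ι] [NormedAddCommGroup Y] [NormedSpace ℝ Y]

theorem tendsto_apply_zero_of_zeroAtInfty {β : Type*} {l : Filter β}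
    (Φ : (ι →ᵇ Y) →L[ℝ] ℝ) {h : β → ι →ᵇ Y} {C : ℝ}
    (hC : ∀ n, ‖h n‖ ≤ C) (h₀ : ∀ n, ZeroAtInfty (h n))
    (hK : ∀ K, IsCompact K → TendstoUniformlyOn (fun n => ⇑(h n)) 0 l K) :
    Tendsto (fun n => Φ (h n)) l (𝓝 0) := by
  refine NormedAddGroup.tendsto_nhds_zero.2 fun ε hε => ?_
  by_contra hfreq
  simp only [not_eventually, not_lt] at hfreq
  obtain ⟨n₀, -⟩ := hfreq.exists
  have hC₀ : 0 ≤ C := (norm_nonneg _).trans (hC n₀)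
  set δ := ε / (2 * (‖Φ‖ + 1)) with hδ_def
  have hδ : 0 < δ := by positivity
  have hΦδ : ‖Φ‖ * δ ≤ ε / 2 := by
    rw [hδ_def, mul_div_assoc', div_le_div_iff₀ (by positivity) two_pos]
    nlinarith [norm_nonneg Φ]
  -- Each hump comes with a sign `s = ±1` making `Φ` large and positive on it.
  have hpick : ∀ K, IsCompact K → ∃ a : β × ℝ, ZeroAtInfty (h a.1) ∧
      (|a.2| = 1 ∧ (∀ t ∈ K, ‖h a.1 t‖ ≤ δ) ∧ ε ≤ a.2 * Φ (h a.1)) := by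
    intro K hKc
    obtain ⟨n, hn, hnK⟩ :=
      (hfreq.and_eventually (Metric.tendstoUniformlyOn_iff.1 (hK K hKc) δ hδ)).exists
    have hnK' : ∀ t ∈ K, ‖h n t‖ ≤ δ := fun t ht => by
      simpa [dist_comm, dist_eq_norm] using (hnK t ht).le
    rcases le_abs.1 (Real.norm_eq_abs _ ▸ hn) with hn | hn
    · exact ⟨(n, 1), h₀ n, by simp, hnK', by simpa using hn⟩
    · exact ⟨(n, -1), h₀ n, by simp, hnK', by simpa using hn⟩
  obtain ⟨a, K, haK, -, hhump⟩ :=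
    exists_seq_subsingleton_humps (fun a : β × ℝ => h a.1) _ hpick hδ isCompact_empty
  have hsum : ∀ m : ℕ, ‖∑ j ∈ Finset.range m, (a j).2 • h (a j).1‖ ≤ m * δ + C := by
    intro m
    refine (norm_le (by positivity)).2 fun t => ?_
    calc ‖(∑ j ∈ Finset.range m, (a j).2 • h (a j).1) t‖
        ≤ ∑ j ∈ Finset.range m, ‖h (a j).1 t‖ := by
          rw [sum_apply]
          refine (norm_sum_le _ _).trans (le_of_eq (Finset.sum_congr rfl fun j _ => ?_))
          rw [smul_apply, norm_smul, Real.norm_eq_abs, (haK j).1, one_mul]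
      _ ≤ m * δ + C := by
          simpa using Finset.sum_le_card_mul_add_of_subsingleton (Finset.range m) hδ.le hC₀
            (fun j _ => (norm_coe_le_norm _ t).trans (hC _)) ((hhump t).anti
              fun j hj => ⟨fun ht => hj.not_ge ((haK j).2.1 t ht), hj.le⟩)
  have hΦsum : ∀ m : ℕ, m * ε ≤ Φ (∑ j ∈ Finset.range m, (a j).2 • h (a j).1) := by
    intro m
    simpa [map_sum, map_smul] using
      Finset.card_nsmul_le_sum (Finset.range m) _ ε fun j _ => (haK j).2.2
  obtain ⟨m, hm⟩ := exists_nat_gt (2 * ‖Φ‖ * C / ε)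
  have := (hΦsum m).trans ((le_abs_self _).trans (Φ.le_opNorm_of_le (hsum m)))
  rw [div_lt_iff₀ hε] at hm
  nlinarith [norm_nonneg Φ]

theorem norm_add_sub_average_le {g f : ι →ᵇ Y} {G : ℕ → ι →ᵇ Y} {K : ℕ → Set ι} {δ : ℝ} (hδ : 0 ≤ δ)
    (hg : ‖g‖ ≤ 1) (hf : ‖f‖ ≤ 1) (hG : ∀ j, ‖G j‖ ≤ 1)
    (hgK : ∀ j, {t | δ ≤ ‖g t‖} ⊆ K j) (hfG : ∀ j, ∀ t ∈ K j, ‖f t - G j t‖ ≤ δ)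
    (hhump : ∀ t, {j | t ∉ K j ∧ δ ≤ ‖G j t‖}.Subsingleton) {N : ℕ} (hN : 0 < N) :
    ‖g + f - (N : ℝ)⁻¹ • ∑ j ∈ Finset.range N, G j‖ ≤ 1 + 2 * δ + 2 / N := by
  have hN' : (0 : ℝ) < N := by exact_mod_cast hN
  refine (norm_le (by positivity)).2 fun t => ?_
  have hft : ‖f t‖ ≤ 1 := (norm_coe_le_norm f t).trans hf
  have hval : (g + f - (N : ℝ)⁻¹ • ∑ j ∈ Finset.range N, G j) t
      = g t + (N : ℝ)⁻¹ • ∑ j ∈ Finset.range N, (f t - G j t) := by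
    simp [Finset.sum_sub_distrib, smul_sub, ← Nat.cast_smul_eq_nsmul ℝ, smul_smul, hN'.ne']
    abel
  have hle : ‖(g + f - (N : ℝ)⁻¹ • ∑ j ∈ Finset.range N, G j) t‖
      ≤ ‖g t‖ + (N : ℝ)⁻¹ * ∑ j ∈ Finset.range N, ‖f t - G j t‖ := by
    rw [hval]
    refine (norm_add_le _ _).trans (add_le_add le_rfl ?_)
    rw [norm_smul, Real.norm_of_nonneg (by positivity)]
    gcongr
    exact norm_sum_le _ _
  by_cases hgt : δ ≤ ‖g t‖
  · have hsum : ∑ j ∈ Finset.range N, ‖f t - G j t‖ ≤ N * δ := by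
      simpa using Finset.sum_le_card_nsmul (Finset.range N) _ δ
        fun j _ => hfG j t (hgK j hgt)
    have := (norm_coe_le_norm g t).trans hg
    calc _ ≤ 1 + (N : ℝ)⁻¹ * (N * δ) := hle.trans (by gcongr)
      _ ≤ 1 + 2 * δ + 2 / N := by
        rw [inv_mul_cancel_left₀ hN'.ne']
        have : 0 ≤ 2 / (N : ℝ) := by positivity
        linarith
  · -- where `g` is small, all but one `G j` are within `1 + δ` of `f`
    have hsum : ∑ j ∈ Finset.range N, ‖f t - G j t‖ ≤ N * (1 + δ) + 2 := by
      simpa using Finset.sum_le_card_mul_add_of_subsingleton (Finset.range N)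
        (by positivity) zero_le_two
        (fun j _ => (norm_sub_le _ _).trans (by linarith [(norm_coe_le_norm (G j) t).trans (hG j)]))
        ((hhump t).anti fun j hj => by
          have hj : 1 + δ < ‖f t - G j t‖ := hj
          refine ⟨fun ht => ?_, ?_⟩
          · linarith [hfG j t ht]
          · linarith [norm_sub_le (f t) (G j t)])
    calc _ ≤ δ + (N : ℝ)⁻¹ * (N * (1 + δ) + 2) := hle.trans (by gcongr; exact (not_le.1 hgt).le)
      _ = 1 + 2 * δ + 2 / N := by field_simp; ring

end BoundedContinuousFunction

section PerfektSpace

variable {X Y ι β : Type*} [NormedAddCommGroup X] [NormedSpace ℝ X]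
  [NormedAddCommGroup Y] [NormedSpace ℝ Y] [TopologicalSpace ι] {T : ι → X →L[ℝ] Y}

def perfektE₀ (T : ι → X →L[ℝ] Y) : Submodule ℝ (perfektE T) :=
  (zeroAtInftySubmodule ι Y).comap (perfektE T).subtype

def PerfektConditionA (T : ι → X →L[ℝ] Y) : Prop :=
  ∀ f ∈ perfektE T, ‖f‖ ≤ 1 → ∀ x : X, (∀ i, f i = T i x) → ∀ ε > (0 : ℝ),
    ∃ g ∈ perfektE T ⊓ zeroAtInftySubmodule ι Y, ‖g‖ ≤ 1 ∧
      ∃ x₀ : X, (∀ i, g i = T i x₀) ∧ ‖x - x₀‖ ≤ ε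

/-- `g` is a bounded family in `E₀` tending to `f` in the norm of `X`, for some choice of
representatives `x n` of `g n` and `y` of `f`. -/
structure IsE₀Approx (l : Filter β) (g : β → perfektE T) (f : perfektE T) : Prop where
  mem : ∀ n, g n ∈ perfektE₀ T
  exists_norm_le : ∃ C, ∀ n, ‖g n‖ ≤ C
  exists_tendsto : ∃ (x : β → X) (y : X), (∀ n i, (g n : ι →ᵇ Y) i = T i (x n))
    ∧ (∀ i, (f : ι →ᵇ Y) i = T i y) ∧ Tendsto x l (𝓝 y)

namespace IsE₀Approx

variable {l : Filter β} {g g' : β → perfektE T} {f f' : perfektE T}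

theorem const (hf : f ∈ perfektE₀ T) : IsE₀Approx l (fun _ => f) f where
  mem _ := hf
  exists_norm_le := ⟨‖f‖, fun _ => le_rfl⟩
  exists_tendsto := by
    obtain ⟨y, hy⟩ := f.2
    exact ⟨fun _ => y, y, fun _ => hy, hy, tendsto_const_nhds⟩

theorem comp {γ : Type*} {l' : Filter γ} {u : γ → β} (hg : IsE₀Approx l g f)
    (hu : Tendsto u l' l) : IsE₀Approx l' (g ∘ u) f where
  mem n := hg.mem (u n)
  exists_norm_le := by
    obtain ⟨C, hC⟩ := hg.exists_norm_le
    exact ⟨C, fun n => hC (u n)⟩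
  exists_tendsto := by
    obtain ⟨x, y, hx, hy, hxy⟩ := hg.exists_tendsto
    exact ⟨x ∘ u, y, fun n => hx (u n), hy, hxy.comp hu⟩

theorem add (hg : IsE₀Approx l g f) (hg' : IsE₀Approx l g' f') :
    IsE₀Approx l (g + g') (f + f') where
  mem n := add_mem (hg.mem n) (hg'.mem n)
  exists_norm_le := by
    obtain ⟨C, hC⟩ := hg.exists_norm_le
    obtain ⟨C', hC'⟩ := hg'.exists_norm_le
    exact ⟨C + C', fun n => (norm_add_le _ _).trans (add_le_add (hC n) (hC' n))⟩
  exists_tendsto := by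
    obtain ⟨x, y, hx, hy, hxy⟩ := hg.exists_tendsto
    obtain ⟨x', y', hx', hy', hxy'⟩ := hg'.exists_tendsto
    exact ⟨x + x', y + y', fun n i => by simp [hx n i, hx' n i], fun i => by simp [hy i, hy' i],
      hxy.add hxy'⟩

theorem const_smul (hg : IsE₀Approx l g f) (c : ℝ) : IsE₀Approx l (c • g) (c • f) where
  mem n := Submodule.smul_mem _ c (hg.mem n)
  exists_norm_le := by
    obtain ⟨C, hC⟩ := hg.exists_norm_le
    exact ⟨‖c‖ * C, fun n => (norm_smul c (g n)).trans_le (by gcongr; exact hC n)⟩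
  exists_tendsto := by
    obtain ⟨x, y, hx, hy, hxy⟩ := hg.exists_tendsto
    exact ⟨c • x, c • y, fun n i => by simp [hx n i], fun i => by simp [hy i], hxy.const_smul c⟩

theorem sub (hg : IsE₀Approx l g f) (hg' : IsE₀Approx l g' f') :
    IsE₀Approx l (g - g') (f - f') := by
  have := hg.add (hg'.const_smul (-1))
  rwa [neg_one_smul ℝ g', neg_one_smul ℝ f', ← sub_eq_add_neg, ← sub_eq_add_neg] at this

theorem tendstoUniformlyOn [CompleteSpace X] (hT : ∀ x, Continuous fun i => T i x)
    (hg : IsE₀Approx l g f) {K : Set ι} (hK : IsCompact K) :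
    TendstoUniformlyOn (fun n => ⇑(g n : ι →ᵇ Y)) (f : ι →ᵇ Y) l K := by
  obtain ⟨x, y, hx, hy, hxy⟩ := hg.exists_tendsto
  have := hK.tendstoUniformlyOn_apply_of_tendsto hT hxy
  rw [show (fun i => T i y) = (f : ι →ᵇ Y) from funext fun i => (hy i).symm] at this
  exact this.congr (Eventually.of_forall fun n i _ => (hx n i).symm)

theorem tendsto_apply_zero [CompleteSpace X] (hT : ∀ x, Continuous fun i => T i x)
    (hg : IsE₀Approx l g 0) (φ : perfektE T →L[ℝ] ℝ) : Tendsto (fun n => φ (g n)) l (𝓝 0) := by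
  obtain ⟨Φ, hΦ, -⟩ := exists_extension_norm_eq (perfektE T) φ
  obtain ⟨C, hC⟩ := hg.exists_norm_le
  simp only [← hΦ]
  exact BoundedContinuousFunction.tendsto_apply_zero_of_zeroAtInfty Φ hC hg.mem fun K hK => by
    simpa using hg.tendstoUniformlyOn hT hK

theorem tendsto_apply_sub [CompleteSpace X] (hT : ∀ x, Continuous fun i => T i x)
    (hg : IsE₀Approx l g f) (hg' : IsE₀Approx l g' f) (φ : perfektE T →L[ℝ] ℝ) :
    Tendsto (fun n => φ (g n) - φ (g' n)) l (𝓝 0) := by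
  have h₀ : IsE₀Approx l (g - g') 0 := sub_self f ▸ hg.sub hg'
  simpa only [Pi.sub_apply, map_sub] using h₀.tendsto_apply_zero hT φ

end IsE₀Approx

end PerfektSpace

namespace PerfektConditionA

variable {X Y ι : Type*} [NormedAddCommGroup X] [NormedSpace ℝ X]
  [NormedAddCommGroup Y] [NormedSpace ℝ Y] [TopologicalSpace ι] {T : ι → X →L[ℝ] Y}
  (hA : PerfektConditionA T)

include hA in
theorem exists_approx (f : perfektE T) {x : X}
    (hx : ∀ i, (f : ι →ᵇ Y) i = T i x) {ε : ℝ} (hε : 0 < ε) :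
    ∃ g ∈ perfektE₀ T, ‖g‖ ≤ ‖f‖ ∧
      ∃ x₀ : X, (∀ i, (g : ι →ᵇ Y) i = T i x₀) ∧ ‖x - x₀‖ ≤ ε := by
  rcases eq_or_ne f 0 with rfl | hf
  · exact ⟨0, zero_mem _, le_rfl, x, hx, by simpa using hε.le⟩
  have hr : 0 < ‖f‖ := norm_pos_iff.2 hf
  obtain ⟨g₀, hg₀, hg₀1, x₀, hx₀, hxx₀⟩ := hA (‖f‖⁻¹ • (f : ι →ᵇ Y))
    (Submodule.smul_mem _ _ f.2)
    (by rw [norm_smul, Real.norm_of_nonneg (by positivity), ← Submodule.coe_norm,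
      inv_mul_cancel₀ hr.ne'])
    (‖f‖⁻¹ • x) (fun i => by simp [hx i]) (ε / ‖f‖) (by positivity)
  obtain ⟨hg₀E, hg₀C⟩ := Submodule.mem_inf.1 hg₀
  refine ⟨‖f‖ • ⟨g₀, hg₀E⟩, Submodule.smul_mem (perfektE₀ T) _ hg₀C, ?_, ‖f‖ • x₀,
    fun i => by simp [hx₀ i], ?_⟩
  · rw [norm_smul, Real.norm_of_nonneg hr.le]
    exact mul_le_of_le_one_right hr.le hg₀1
  · calc ‖x - ‖f‖ • x₀‖ = ‖‖f‖ • (‖f‖⁻¹ • x - x₀)‖ := by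
          rw [smul_sub, smul_inv_smul₀ hr.ne']
      _ = ‖f‖ * ‖‖f‖⁻¹ • x - x₀‖ := by rw [norm_smul, Real.norm_of_nonneg hr.le]
      _ ≤ ‖f‖ * (ε / ‖f‖) := by gcongr
      _ = ε := mul_div_cancel₀ ε hr.ne'

include hA in
theorem exists_isE₀Approx (f : perfektE T) :
    ∃ g : ℕ → perfektE T, IsE₀Approx atTop g f ∧ ∀ n, ‖g n‖ ≤ ‖f‖ := by
  obtain ⟨x, hx⟩ := f.2
  choose g hg hgf x₀ hx₀ hxx₀ using fun n : ℕ =>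
    hA.exists_approx f hx (Nat.one_div_pos_of_nat (α := ℝ) (n := n))
  refine ⟨g, ⟨hg, ⟨‖f‖, hgf⟩, x₀, x, hx₀, hx, ?_⟩, hgf⟩
  refine tendsto_iff_norm_sub_tendsto_zero.2 (squeeze_zero (fun _ => norm_nonneg _)
    (fun n => ?_) tendsto_one_div_add_atTop_nhds_zero_nat)
  rw [norm_sub_rev]
  exact hxx₀ n

noncomputable def approxSeq (f : perfektE T) : ℕ → perfektE T :=
  (hA.exists_isE₀Approx f).choose

theorem isE₀Approx_approxSeq (f : perfektE T) : IsE₀Approx atTop (hA.approxSeq f) f :=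
  (hA.exists_isE₀Approx f).choose_spec.1

theorem norm_approxSeq_le (f : perfektE T) (n : ℕ) : ‖hA.approxSeq f n‖ ≤ ‖f‖ :=
  (hA.exists_isE₀Approx f).choose_spec.2 n

noncomputable def projValue (φ : perfektE T →L[ℝ] ℝ) (f : perfektE T) : ℝ :=
  limUnder atTop fun n => φ (hA.approxSeq f n)

variable [CompleteSpace X] (hT : ∀ x, Continuous fun i => T i x)
include hT

theorem tendsto_projValue {g : ℕ → perfektE T} {f : perfektE T} (hg : IsE₀Approx atTop g f)
    (φ : perfektE T →L[ℝ] ℝ) : Tendsto (fun n => φ (g n)) atTop (𝓝 (hA.projValue φ f)) := by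
  have happrox := hA.isE₀Approx_approxSeq f
  -- two approximating sequences, indexed by `ℕ × ℕ`, differ by a weakly null family
  have hcauchy : CauchySeq fun n => φ (hA.approxSeq f n) := by
    rw [cauchySeq_iff_tendsto_dist_atTop_0, ← prod_atTop_atTop_eq]
    simpa [Real.dist_eq] using
      ((happrox.comp tendsto_fst).tendsto_apply_sub hT (happrox.comp tendsto_snd) φ).abs
  have := (hg.tendsto_apply_sub hT happrox φ).add hcauchy.tendsto_limUnder
  simp only [sub_add_cancel, zero_add] at this
  exact this

theorem projValue_add (φ : perfektE T →L[ℝ] ℝ) (f f' : perfektE T) :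
    hA.projValue φ (f + f') = hA.projValue φ f + hA.projValue φ f' := by
  have hf := hA.isE₀Approx_approxSeq f
  have hf' := hA.isE₀Approx_approxSeq f'
  refine tendsto_nhds_unique (hA.tendsto_projValue hT (hf.add hf') φ) ?_
  simpa using (hA.tendsto_projValue hT hf φ).add (hA.tendsto_projValue hT hf' φ)

theorem projValue_smul (φ : perfektE T →L[ℝ] ℝ) (c : ℝ) (f : perfektE T) :
    hA.projValue φ (c • f) = c * hA.projValue φ f := by
  have hf := hA.isE₀Approx_approxSeq f
  refine tendsto_nhds_unique (hA.tendsto_projValue hT (hf.const_smul c) φ) ?_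
  simpa using (hA.tendsto_projValue hT hf φ).const_mul c

theorem norm_projValue_le (φ : perfektE T →L[ℝ] ℝ) (f : perfektE T) :
    ‖hA.projValue φ f‖ ≤ ‖φ‖ * ‖f‖ :=
  le_of_tendsto (hA.tendsto_projValue hT (hA.isE₀Approx_approxSeq f) φ).norm
    (Eventually.of_forall fun n => φ.le_opNorm_of_le (hA.norm_approxSeq_le f n))

noncomputable def projFunctional (φ : perfektE T →L[ℝ] ℝ) : perfektE T →L[ℝ] ℝ :=
  LinearMap.mkContinuous
    { toFun := hA.projValue φ
      map_add' := hA.projValue_add hT φ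
      map_smul' := hA.projValue_smul hT φ }
    ‖φ‖ (hA.norm_projValue_le hT φ)

theorem projFunctional_apply (φ : perfektE T →L[ℝ] ℝ) (f : perfektE T) :
    hA.projFunctional hT φ f = hA.projValue φ f :=
  rfl

theorem norm_projFunctional_le (φ : perfektE T →L[ℝ] ℝ) : ‖hA.projFunctional hT φ‖ ≤ ‖φ‖ :=
  LinearMap.mkContinuous_norm_le _ (norm_nonneg φ) _

theorem projValue_add_left (φ ψ : perfektE T →L[ℝ] ℝ) (f : perfektE T) :
    hA.projValue (φ + ψ) f = hA.projValue φ f + hA.projValue ψ f :=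
  have hf := hA.isE₀Approx_approxSeq f
  tendsto_nhds_unique (hA.tendsto_projValue hT hf (φ + ψ))
    ((hA.tendsto_projValue hT hf φ).add (hA.tendsto_projValue hT hf ψ))

theorem projValue_smul_left (c : ℝ) (φ : perfektE T →L[ℝ] ℝ) (f : perfektE T) :
    hA.projValue (c • φ) f = c * hA.projValue φ f :=
  have hf := hA.isE₀Approx_approxSeq f
  tendsto_nhds_unique (hA.tendsto_projValue hT hf (c • φ))
    ((hA.tendsto_projValue hT hf φ).const_mul c)

noncomputable def projection : (perfektE T →L[ℝ] ℝ) →L[ℝ] (perfektE T →L[ℝ] ℝ) :=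
  LinearMap.mkContinuous
    { toFun := hA.projFunctional hT
      map_add' φ ψ := by
        ext f
        simp only [_root_.add_apply, projFunctional_apply]
        exact hA.projValue_add_left hT φ ψ f
      map_smul' c φ := by
        ext f
        simp only [_root_.smul_apply, projFunctional_apply, RingHom.id_apply,
          smul_eq_mul]
        exact hA.projValue_smul_left hT c φ f }
    1 fun φ => by
      rw [one_mul]
      exact hA.norm_projFunctional_le hT φ

theorem projection_apply_apply (φ : perfektE T →L[ℝ] ℝ) (f : perfektE T) :
    hA.projection hT φ f = hA.projValue φ f :=
  rfl

theorem projection_apply_of_mem (φ : perfektE T →L[ℝ] ℝ) {g : perfektE T}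
    (hg : g ∈ perfektE₀ T) : hA.projection hT φ g = φ g :=
  tendsto_nhds_unique (hA.tendsto_projValue hT (IsE₀Approx.const hg) φ) tendsto_const_nhds

theorem projection_idem (φ : perfektE T →L[ℝ] ℝ) :
    hA.projection hT (hA.projection hT φ) = hA.projection hT φ := by
  ext f
  have happrox := hA.isE₀Approx_approxSeq f
  refine tendsto_nhds_unique (hA.tendsto_projValue hT happrox _) ?_
  simp only [hA.projection_apply_of_mem hT φ (happrox.mem _)]
  exact hA.tendsto_projValue hT happrox φ

theorem projection_eq_zero_iff (φ : perfektE T →L[ℝ] ℝ) :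
    hA.projection hT φ = 0 ↔ ∀ g ∈ perfektE₀ T, φ g = 0 := by
  refine ⟨fun h g hg => ?_, fun h => ContinuousLinearMap.ext fun f => ?_⟩
  · rw [← hA.projection_apply_of_mem hT φ hg, h, zero_apply]
  · show hA.projValue φ f = 0
    have happrox := hA.isE₀Approx_approxSeq f
    refine tendsto_nhds_unique (hA.tendsto_projValue hT happrox φ) ?_
    simpa only [h _ (happrox.mem _)] using tendsto_const_nhds

theorem exists_mem_norm_le_one_and_le_apply (φ : perfektE T →L[ℝ] ℝ) {ε : ℝ} (hε : 0 < ε) :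
    ∃ g ∈ perfektE₀ T, ‖g‖ ≤ 1 ∧ ‖hA.projection hT φ‖ - ε ≤ φ g := by
  obtain ⟨u, hu, hPu⟩ :=
    (hA.projection hT φ).exists_norm_le_one_and_opNorm_sub_le_apply (half_pos hε)
  have happrox := hA.isE₀Approx_approxSeq u
  obtain ⟨n, hn⟩ := ((hA.tendsto_projValue hT happrox φ).eventually
    (lt_mem_nhds (sub_lt_self _ (half_pos hε)))).exists
  refine ⟨hA.approxSeq u n, happrox.mem n, (hA.norm_approxSeq_le u n).trans hu, ?_⟩
  rw [projection_apply_apply] at hPu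
  linarith

theorem exists_norm_le_and_le_apply (φ : perfektE T →L[ℝ] ℝ) {f g : perfektE T} (hf : ‖f‖ ≤ 1)
    (hg : g ∈ perfektE₀ T) (hg₁ : ‖g‖ ≤ 1) {ε : ℝ} (hε : 0 < ε) :
    ∃ h : perfektE T, ‖h‖ ≤ 1 + ε ∧ φ g + (φ - hA.projection hT φ) f - ε ≤ φ h := by
  obtain ⟨N, hN⟩ := exists_nat_gt (4 / ε)
  have hN₀ : (0 : ℝ) < N := (by positivity : (0 : ℝ) < 4 / ε).trans hN
  have hδ : 0 < ε / 4 := by positivity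
  have happrox := hA.isE₀Approx_approxSeq f
  have hpick : ∀ K, IsCompact K → ∃ a : perfektE T, ZeroAtInfty (a : ι →ᵇ Y) ∧ (‖a‖ ≤ 1 ∧
      (∀ t ∈ K, ‖(f : ι →ᵇ Y) t - (a : ι →ᵇ Y) t‖ ≤ ε / 4) ∧ φ a ≤ hA.projValue φ f + ε) := by
    intro K hK
    obtain ⟨n, hnK, hnφ⟩ := ((Metric.tendstoUniformlyOn_iff.1
      (happrox.tendstoUniformlyOn hT hK) _ hδ).and ((hA.tendsto_projValue hT happrox φ).eventually
        (gt_mem_nhds (lt_add_of_pos_right _ hε)))).exists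
    exact ⟨hA.approxSeq f n, happrox.mem n, (hA.norm_approxSeq_le f n).trans hf,
      fun t ht => by simpa [dist_eq_norm] using (hnK t ht).le, hnφ.le⟩
  obtain ⟨G, K, hG, hgK, hhump⟩ := exists_seq_subsingleton_humps
    (fun a : perfektE T => (a : ι →ᵇ Y)) _ hpick hδ (hg _ hδ)
  refine ⟨g + f - (N : ℝ)⁻¹ • ∑ j ∈ Finset.range N, G j, ?_, ?_⟩
  · have hnorm : ‖((g + f - (N : ℝ)⁻¹ • ∑ j ∈ Finset.range N, G j : perfektE T) : ι →ᵇ Y)‖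
        ≤ 1 + 2 * (ε / 4) + 2 / N := by
      push_cast
      exact BoundedContinuousFunction.norm_add_sub_average_le hδ.le hg₁ hf (fun j => (hG j).1)
        hgK (fun j => (hG j).2.1) hhump (Nat.cast_pos.1 hN₀)
    refine hnorm.trans ?_
    have : 2 / (N : ℝ) < ε / 2 := by
      rw [div_lt_iff₀ hN₀]
      rw [div_lt_iff₀ hε] at hN
      linarith
    linarith
  · have hsum : ∑ j ∈ Finset.range N, φ (G j) ≤ N * (hA.projValue φ f + ε) := by
      have := Finset.sum_le_card_nsmul (Finset.range N) _ _ fun j _ => (hG j).2.2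
      rwa [Finset.card_range, nsmul_eq_mul] at this
    have : (N : ℝ)⁻¹ * ∑ j ∈ Finset.range N, φ (G j) ≤ hA.projValue φ f + ε := by
      rw [inv_mul_le_iff₀ hN₀]
      exact hsum
    simp only [map_sub, map_add, map_smul, map_sum, smul_eq_mul, _root_.sub_apply,
      projection_apply_apply]
    linarith

theorem norm_projection_add_norm_sub_le (φ : perfektE T →L[ℝ] ℝ) :
    ‖hA.projection hT φ‖ + ‖φ - hA.projection hT φ‖ ≤ ‖φ‖ := by
  have key : ∀ ε > 0, ‖hA.projection hT φ‖ + ‖φ - hA.projection hT φ‖ ≤ ‖φ‖ + (‖φ‖ + 3) * ε := by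
    intro ε hε
    obtain ⟨g, hg, hg₁, hφg⟩ := hA.exists_mem_norm_le_one_and_le_apply hT φ hε
    obtain ⟨f, hf₁, hψf⟩ := (φ - hA.projection hT φ).exists_norm_le_one_and_opNorm_sub_le_apply hε
    obtain ⟨h, hh₁, hφh⟩ := hA.exists_norm_le_and_le_apply hT φ hf₁ hg hg₁ hε
    have := (le_abs_self (φ h)).trans (φ.le_opNorm_of_le hh₁)
    nlinarith [norm_nonneg φ]
  refine le_of_forall_pos_le_add fun η hη => ?_
  have hφ₃ : 0 < ‖φ‖ + 3 := by positivity
  simpa [mul_div_cancel₀ η hφ₃.ne'] using key (η / (‖φ‖ + 3)) (by positivity)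

end PerfektConditionA

section Perfekt

variable {X Y ι : Type*}
  [NormedAddCommGroup X] [NormedSpace ℝ X] [CompleteSpace X]
  [NormedAddCommGroup Y] [NormedSpace ℝ Y] [CompleteSpace Y]
  [TopologicalSpace ι] [LocallyCompactSpace ι] [T2Space ι]

theorem perfekt_mIdeal_general
    (T : ι → X →L[ℝ] Y)
    (hTcont : ∀ x : X, Continuous fun i => T i x)
    (hA : ∀ f ∈ perfektE T, ‖f‖ ≤ 1 → ∀ x : X, (∀ i, f i = T i x) → ∀ ε > (0 : ℝ),
      ∃ g ∈ perfektE T ⊓ zeroAtInftySubmodule ι Y, ‖g‖ ≤ 1 ∧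
        ∃ x₀ : X, (∀ i, g i = T i x₀) ∧ ‖x - x₀‖ ≤ ε) :
    IsMIdeal {f : ↥(perfektE T) | ZeroAtInfty (f : BoundedContinuousFunction ι Y)} := by
  have hA : PerfektConditionA T := hA
  exact ⟨hA.projection hTcont, hA.projection_idem hTcont, hA.projection_eq_zero_iff hTcont,
    fun φ => le_antisymm (norm_le_norm_add_norm_sub' φ _)
      (hA.norm_projection_add_norm_sub_le hTcont φ)⟩

/-- In the Perfekt setup, under the density assumption (A), `E₀` is an M-ideal in
`(E, ‖·‖_∞)`. -/
theorem perfekt_mIdeal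
    (T : ι → X →L[ℝ] Y) (hTinj : Function.Injective T)
    (hTcont : ∀ x : X, Continuous fun i => T i x)
    (hrefl : Function.Surjective (NormedSpace.inclusionInDoubleDual ℝ X))
    (hsep : ∀ x : X, (∃ C : ℝ, ∀ i, ‖T i x‖ ≤ C) → (∀ i, T i x = 0) → x = 0)
    (hclosed : IsClosed ((perfektE T : Set (BoundedContinuousFunction ι Y))))
    (hA : ∀ f ∈ perfektE T, ‖f‖ ≤ 1 → ∀ x : X, (∀ i, f i = T i x) → ∀ ε > (0 : ℝ),
      ∃ g ∈ perfektE T ⊓ zeroAtInftySubmodule ι Y, ‖g‖ ≤ 1 ∧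
        ∃ x₀ : X, (∀ i, g i = T i x₀) ∧ ‖x - x₀‖ ≤ ε) :
    IsMIdeal {f : ↥(perfektE T) | ZeroAtInfty (f : BoundedContinuousFunction ι Y)} :=
  perfekt_mIdeal_general T hTcont hA

end Perfekt
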